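/- arXiv:2111.11661 — 5 statements merged into one kernel-verified Lean document; each statement's English description precedes it below -/
import Mathlib

section
/- Suppose f : {0,...,n} → ℝ≥0 is a PMF (sums to 1) satisfying f(k) ≤ e^ε f(k+1) for all k ∈ {0,...,n-1}, with ε > 0. Then f(0) ≤ (1 - e^{-ε})/(1 - e^{-(n+1)ε}). -/
/-! Multiplying the decay constraint by `e^{-ε}` gives `e^{-kε} f 0 ≤ f k` for every `k ≤ n`;
summing over `k` bounds `f 0` times a geometric sum by `1`, and the geometric sum is evaluated. -/

open Finset

theorem pow_mul_le_of_mul_le_succ {R : Type*} [Semiring R] [PartialOrder R] [IsOrderedRing R]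
    {n : ℕ} {r : R} (hr : 0 ≤ r) {f : ℕ → R} (hf : ∀ k < n, r * f k ≤ f (k + 1)) :
    ∀ k ≤ n, r ^ k * f 0 ≤ f k := by
  intro k hk
  induction k with
  | zero => simp
  | succ m ih =>
    calc r ^ (m + 1) * f 0 = r * (r ^ m * f 0) := by rw [pow_succ', mul_assoc]
      _ ≤ r * f m := mul_le_mul_of_nonneg_left (ih (by omega)) hr
      _ ≤ f (m + 1) := hf m hk

theorem geom_sum_mul_le_sum_of_mul_le_succ {R : Type*} [Semiring R] [PartialOrder R]
    [IsOrderedRing R] {n : ℕ} {r : R} (hr : 0 ≤ r) {f : ℕ → R}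
    (hf : ∀ k < n, r * f k ≤ f (k + 1)) :
    (∑ k ∈ range (n + 1), r ^ k) * f 0 ≤ ∑ k ∈ range (n + 1), f k := by
  rw [sum_mul]
  exact sum_le_sum fun k hk => pow_mul_le_of_mul_le_succ hr hf k (by simpa [Nat.lt_succ_iff] using hk)

theorem inv_geom_sum_eq {r : ℝ} (hr : r ≠ 1) (n : ℕ) :
    (∑ k ∈ range n, r ^ k)⁻¹ = (1 - r) / (1 - r ^ n) := by
  rw [geom_sum_eq hr, inv_div, ← neg_div_neg_eq, neg_sub, neg_sub]

theorem stmt_2_general (n : ℕ) (ε : ℝ) (hε : 0 < ε) (f : ℕ → ℝ)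
    (hsum : ∑ k ∈ Finset.range (n + 1), f k = 1)
    (hDP : ∀ k < n, f k ≤ Real.exp ε * f (k + 1)) :
    f 0 ≤ (1 - Real.exp (-ε)) / (1 - Real.exp (-((n : ℝ) + 1) * ε)) := by
  set r := Real.exp (-ε)
  have hr_ne_one : r ≠ 1 := by simpa [r] using hε.ne'
  have hdecay : ∀ k < n, r * f k ≤ f (k + 1) := fun k hk => by
    calc r * f k ≤ r * (Real.exp ε * f (k + 1)) :=
          mul_le_mul_of_nonneg_left (hDP k hk) (Real.exp_pos _).le
      _ = f (k + 1) := by rw [← mul_assoc, ← Real.exp_add, neg_add_cancel, Real.exp_zero, one_mul]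
  have hbound := geom_sum_mul_le_sum_of_mul_le_succ (Real.exp_pos _).le hdecay
  have hS_pos : 0 < ∑ k ∈ range (n + 1), r ^ k :=
    sum_pos (fun k _ => pow_pos (Real.exp_pos _) k) nonempty_range_add_one
  have hpow : r ^ (n + 1) = Real.exp (-((n : ℝ) + 1) * ε) := by
    rw [← Real.exp_nat_mul]; push_cast; ring_nf
  rw [← hpow, ← inv_geom_sum_eq hr_ne_one, ← one_div, le_div_iff₀ hS_pos, mul_comm, ← hsum]
  exact hbound

theorem stmt_2 (n : ℕ) (ε : ℝ) (hε : 0 < ε) (f : ℕ → ℝ)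
    (hnonneg : ∀ k ≤ n, 0 ≤ f k)
    (hsum : ∑ k ∈ Finset.range (n + 1), f k = 1)
    (hDP : ∀ k < n, f k ≤ Real.exp ε * f (k + 1)) :
    f 0 ≤ (1 - Real.exp (-ε)) / (1 - Real.exp (-((n : ℝ) + 1) * ε)) :=
  stmt_2_general n ε hε f hsum hDP
end

section
/- For ε > 0 and n ∈ ℕ, the error rate ρ(n,ε) = 1 - (1 - e^{-ε})/(1 - e^{-(n+1)ε}) is strictly decreasing in ε. -/
open Finset

/-
Writing x = e^{-ε} ∈ (0, 1), the ratio (1 - x) / (1 - x^{n+1}) is the reciprocal of the geometric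
sum 1 + x + ⋯ + xⁿ. For n ≥ 1 that sum is strictly increasing in x ≥ 0, and x is strictly
decreasing in ε, so the ratio increases and the error rate decreases.
-/

theorem one_sub_div_one_sub_pow_eq_inv_geom_sum {K : Type*} [Field K] {x : K} (hx : x ≠ 1)
    (n : ℕ) : (1 - x) / (1 - x ^ n) = (∑ i ∈ range n, x ^ i)⁻¹ := by
  rw [geom_sum_eq hx, inv_div, ← neg_sub x, ← neg_sub (x ^ n), neg_div_neg_eq]

theorem geom_sum_lt_geom_sum {R : Type*} [Semiring R] [PartialOrder R] [IsStrictOrderedRing R]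
    {x y : R} (hx : 0 ≤ x) (hxy : x < y) {n : ℕ} (hn : 1 < n) :
    ∑ i ∈ range n, x ^ i < ∑ i ∈ range n, y ^ i :=
  sum_lt_sum (fun i _ => pow_le_pow_left₀ hx hxy.le i)
    ⟨1, mem_range.2 hn, by simpa using hxy⟩

theorem stmt_4 (n : ℕ) (hn : 1 ≤ n) :
    StrictAntiOn
      (fun ε : ℝ => 1 - (1 - Real.exp (-ε)) / (1 - Real.exp (-((n : ℝ) + 1) * ε)))
      (Set.Ioi (0 : ℝ)) := by
  have ratio_eq (ε : ℝ) (hε : 0 < ε) :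
      (1 - Real.exp (-ε)) / (1 - Real.exp (-((n : ℝ) + 1) * ε)) =
        (∑ i ∈ range (n + 1), Real.exp (-ε) ^ i)⁻¹ := by
    have hpow : Real.exp (-((n : ℝ) + 1) * ε) = Real.exp (-ε) ^ (n + 1) := by
      rw [← Real.exp_nat_mul]; push_cast; ring_nf
    rw [hpow, one_sub_div_one_sub_pow_eq_inv_geom_sum (Real.exp_lt_one_iff.2 (by linarith)).ne]
  intro a (ha : 0 < a) b (hb : 0 < b) hab
  have hexp : Real.exp (-b) < Real.exp (-a) := Real.exp_lt_exp.2 (by linarith)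
  have hsum := geom_sum_lt_geom_sum (Real.exp_pos _).le hexp (Nat.succ_lt_succ hn)
  have hpos := geom_sum_pos (Real.exp_pos (-b)).le (Nat.succ_ne_zero n)
  simp only [ratio_eq a ha, ratio_eq b hb]
  linarith [inv_strictAnti₀ hpos hsum]
end

section
/- Fix ε > 0 and n ∈ ℕ with n ≥ 2. The boundary sequence δ_k = e^{-(n-k)ε}(1-e^{-ε})/(1-e^{-(n-k+1)ε}) is strictly increasing in k for k ∈ {1,...,n}, and δ_k < δ̄_k for each k ∈ {1,...,n-1}, where δ̄_k = e^{-(n-k-1)ε}(1-e^{-ε})/(1-e^{-(n-k+1)ε}). Hence the flat regions [δ_k, δ̄_k] are nondegenerate and ordered. -/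
/-! The boundary point δ_k depends on k only through m = n - k, and multiplying numerator and
denominator by e^{mε} turns it into (1 - e^{-ε}) / (e^{mε} - e^{-ε}), visibly strictly decreasing
in m. The upper point δ̄_k differs from δ_k only by the factor e^{ε} > 1. -/

open Real

/-- `δ_k = flatRegionLower ε (n - k)`. -/
noncomputable def flatRegionLower (ε m : ℝ) : ℝ :=
  exp (-m * ε) * ((1 - exp (-ε)) / (1 - exp (-(m + 1) * ε)))

lemma flatRegionLower_eq (ε m : ℝ) :
    flatRegionLower ε m = (1 - exp (-ε)) / (exp (m * ε) - exp (-ε)) := by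
  have hden : 1 - exp (-(m + 1) * ε) = exp (-m * ε) * (exp (m * ε) - exp (-ε)) := by
    rw [mul_sub, ← exp_add, ← exp_add, ← add_mul, neg_add_cancel, zero_mul, exp_zero]
    ring_nf
  rw [flatRegionLower, hden, ← mul_div_assoc, mul_div_mul_left _ _ (exp_ne_zero _)]

lemma flatRegionLower_strictAntiOn {ε : ℝ} (hε : 0 < ε) :
    StrictAntiOn (flatRegionLower ε) (Set.Ioi (-1)) := by
  intro m (hm : -1 < m) m' _ hmm'
  have exp_mul_lt {a b : ℝ} (hab : a < b) : exp (a * ε) < exp (b * ε) :=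
    exp_lt_exp.2 (mul_lt_mul_of_pos_right hab hε)
  rw [flatRegionLower_eq, flatRegionLower_eq]
  refine div_lt_div_of_pos_left (sub_pos.2 (exp_lt_one_iff.2 (neg_lt_zero.2 hε))) ?_ ?_
  · simpa [sub_pos] using exp_mul_lt hm
  · exact sub_lt_sub_right (exp_mul_lt hmm') _

theorem stmt_7_general (n : ℕ) (ε : ℝ) (hε : 0 < ε) :
    (∀ k l : ℕ, 1 ≤ k → k < l → l ≤ n →
      Real.exp (-((n : ℝ) - k) * ε) *
          ((1 - Real.exp (-ε)) / (1 - Real.exp (-((n : ℝ) - k + 1) * ε))) <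
      Real.exp (-((n : ℝ) - l) * ε) *
          ((1 - Real.exp (-ε)) / (1 - Real.exp (-((n : ℝ) - l + 1) * ε)))) ∧
    (∀ k : ℕ, 1 ≤ k → k ≤ n - 1 →
      Real.exp (-((n : ℝ) - k) * ε) *
          ((1 - Real.exp (-ε)) / (1 - Real.exp (-((n : ℝ) - k + 1) * ε))) <
      Real.exp (-((n : ℝ) - k - 1) * ε) *
          ((1 - Real.exp (-ε)) / (1 - Real.exp (-((n : ℝ) - k + 1) * ε)))) := by
  refine ⟨fun k l _ hkl hln => ?_, fun k _ hkn => ?_⟩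
  · have hkl' : (k : ℝ) < l := by exact_mod_cast hkl
    have hln' : (l : ℝ) ≤ n := by exact_mod_cast hln
    exact flatRegionLower_strictAntiOn hε (show -1 < (n : ℝ) - l by linarith)
      (show -1 < (n : ℝ) - k by linarith) (by linarith)
  · have hkn' : (k : ℝ) + 1 ≤ n := by exact_mod_cast (by omega : k + 1 ≤ n)
    refine mul_lt_mul_of_pos_right (exp_lt_exp.2 (by nlinarith)) (div_pos ?_ ?_) <;>
      refine sub_pos.2 (exp_lt_one_iff.2 ?_) <;> nlinarith

theorem stmt_7 (n : ℕ) (hn : 2 ≤ n) (ε : ℝ) (hε : 0 < ε) :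
    (∀ k l : ℕ, 1 ≤ k → k < l → l ≤ n →
      Real.exp (-((n : ℝ) - k) * ε) *
          ((1 - Real.exp (-ε)) / (1 - Real.exp (-((n : ℝ) - k + 1) * ε))) <
      Real.exp (-((n : ℝ) - l) * ε) *
          ((1 - Real.exp (-ε)) / (1 - Real.exp (-((n : ℝ) - l + 1) * ε)))) ∧
    (∀ k : ℕ, 1 ≤ k → k ≤ n - 1 →
      Real.exp (-((n : ℝ) - k) * ε) *
          ((1 - Real.exp (-ε)) / (1 - Real.exp (-((n : ℝ) - k + 1) * ε))) <
      Real.exp (-((n : ℝ) - k - 1) * ε) *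
          ((1 - Real.exp (-ε)) / (1 - Real.exp (-((n : ℝ) - k + 1) * ε)))) :=
  stmt_7_general n ε hε
end

section
/- Fix ε > 0, n, k ∈ ℕ with 1 ≤ k ≤ n, and δ ∈ ℝ with e^{-(n-k+1)ε}(1-e^{-ε})/(1-e^{-(n-k+2)ε})·e^ε < δ ≤ e^{-(n-k)ε}(1-e^{-ε})/(1-e^{-(n-k+1)ε}). Define f(h) = δ e^{(n-k-h)ε} for h ∈ {0,...,n-k} and f(h) = e^{(n-h)ε}·((e^ε-1)/(e^{kε}-1))·(1 - δ/δ_k) for h ∈ {n-k+1,...,n}, where δ_k = e^{-(n-k)ε}(1-e^{-ε})/(1-e^{-(n-k+1)ε}). Then ∑_{h=0}^n f(h) = 1. -/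
/-!
Put `q = e^ε` and `m = n - k`. The threshold `δ_k` simplifies to `(q - 1) / (q^(m+1) - 1)`, the
reciprocal of the geometric sum `1 + q + ⋯ + q^m`, so the first `m + 1` masses add up to `δ / δ_k`.
The last `k` masses are `1 - δ / δ_k` times the geometric weights `q^(k-1-i) (q - 1) / (q^k - 1)`,
which add up to one.
-/

open Finset Real

lemma sum_range_exp_sub_mul_eq_div (N : ℕ) {ε : ℝ} (hε : ε ≠ 0) :
    ∑ h ∈ range N, exp (((N : ℝ) - 1 - h) * ε) = (exp (N * ε) - 1) / (exp ε - 1) := by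
  have hterm : ∀ h ∈ range N, exp (((N : ℝ) - 1 - h) * ε) = exp ε ^ (N - 1 - h) := by
    intro h hh
    have : h < N := mem_range.mp hh
    rw [← exp_nat_mul, Nat.cast_sub (by omega), Nat.cast_sub (by omega), Nat.cast_one]
  rw [sum_congr rfl hterm, sum_range_reflect (exp ε ^ ·) N,
    geom_sum_eq (by simpa [exp_eq_one_iff] using hε), exp_nat_mul]

lemma exp_neg_mul_mul_div_eq_div_exp_sub_one (x ε : ℝ) :
    exp (-x * ε) * ((1 - exp (-ε)) / (1 - exp (-(x + 1) * ε))) =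
      (exp ε - 1) / (exp ((x + 1) * ε) - 1) := by
  have hx : exp ((x + 1) * ε) = exp (x * ε) * exp ε := by rw [← exp_add]; ring_nf
  have hne : exp (x * ε) * exp ε ≠ 0 := by positivity
  rw [hx, ← div_div_div_cancel_right₀ hne]
  simp only [neg_mul, exp_neg, add_mul, one_mul, exp_add]
  field_simp

theorem stmt_9_general (n k : ℕ) (hk1 : 1 ≤ k) (hk2 : k ≤ n) (ε : ℝ) (hε : 0 < ε)
    (δ : ℝ)
    (f : ℕ → ℝ)
    (hf : ∀ h : ℕ, f h =
      if h ≤ n - k then δ * Real.exp (((n : ℝ) - k - h) * ε)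
      else
        Real.exp (((n : ℝ) - h) * ε) *
          ((Real.exp ε - 1) / (Real.exp ((k : ℝ) * ε) - 1)) *
          (1 - δ / (Real.exp (-((n : ℝ) - k) * ε) *
            ((1 - Real.exp (-ε)) / (1 - Real.exp (-((n : ℝ) - k + 1) * ε)))))) :
    ∑ h ∈ Finset.range (n + 1), f h = 1 := by
  obtain ⟨m, rfl⟩ := Nat.exists_eq_add_of_le' hk2
  simp only [exp_neg_mul_mul_div_eq_div_exp_sub_one, Nat.add_sub_cancel] at hf
  have hm : ((m + k : ℕ) : ℝ) - k = ((m + 1 : ℕ) : ℝ) - 1 := by push_cast; ring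
  set δₖ := (exp ε - 1) / (exp (((m + 1 : ℕ) : ℝ) * ε) - 1) with hδₖ
  have hhead : ∀ h ∈ range (m + 1), f h = δ * exp ((((m + 1 : ℕ) : ℝ) - 1 - h) * ε) := by
    intro h hh
    rw [hf, if_pos (Nat.lt_succ_iff.mp (mem_range.mp hh)), hm]
  have htail : ∀ i ∈ range k, f (m + 1 + i) = exp (((k : ℝ) - 1 - i) * ε) *
      ((exp ε - 1) / (exp (k * ε) - 1)) * (1 - δ / δₖ) := by
    intro i _
    rw [hf, if_neg (by omega), hm, sub_add_cancel]
    congr 3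
    push_cast
    ring
  have h1 : exp ε - 1 ≠ 0 := by simp [sub_eq_zero, exp_eq_one_iff, hε.ne']
  have hk : exp (k * ε) - 1 ≠ 0 := by simp [sub_eq_zero, exp_eq_one_iff, hε.ne']; omega
  have hhead_sum : ∑ h ∈ range (m + 1), f h = δ / δₖ := by
    rw [sum_congr rfl hhead, ← mul_sum, sum_range_exp_sub_mul_eq_div _ hε.ne', hδₖ,
      div_div_eq_mul_div, mul_div_assoc]
  have htail_sum : ∑ i ∈ range k, f (m + 1 + i) = 1 - δ / δₖ := by
    rw [sum_congr rfl htail, ← sum_mul, ← sum_mul, sum_range_exp_sub_mul_eq_div _ hε.ne',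
      div_mul_div_cancel₀ h1, div_self hk, one_mul]
  rw [show m + k + 1 = (m + 1) + k by ring, sum_range_add, hhead_sum, htail_sum, add_sub_cancel]

theorem stmt_9 (n k : ℕ) (hk1 : 1 ≤ k) (hk2 : k ≤ n) (ε : ℝ) (hε : 0 < ε)
    (δ : ℝ)
    (hδ1 : Real.exp (-((n : ℝ) - k + 1) * ε) *
      ((1 - Real.exp (-ε)) / (1 - Real.exp (-((n : ℝ) - k + 2) * ε))) * Real.exp ε < δ)
    (hδ2 : δ ≤ Real.exp (-((n : ℝ) - k) * ε) *
      ((1 - Real.exp (-ε)) / (1 - Real.exp (-((n : ℝ) - k + 1) * ε))))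
    (f : ℕ → ℝ)
    (hf : ∀ h : ℕ, f h =
      if h ≤ n - k then δ * Real.exp (((n : ℝ) - k - h) * ε)
      else
        Real.exp (((n : ℝ) - h) * ε) *
          ((Real.exp ε - 1) / (Real.exp ((k : ℝ) * ε) - 1)) *
          (1 - δ / (Real.exp (-((n : ℝ) - k) * ε) *
            ((1 - Real.exp (-ε)) / (1 - Real.exp (-((n : ℝ) - k + 1) * ε)))))) :
    ∑ h ∈ Finset.range (n + 1), f h = 1 :=
  stmt_9_general n k hk1 hk2 ε hε δ f hf
end

section
/- Let ε > 0, n, μ̄ ∈ ℕ with 1 ≤ μ̄ ≤ n, b = ⌊n/μ̄⌋, r = n - bμ̄. The staircase PMF f defined by f(0) = φ₀ = (1 + μ̄∑_{i=1}^b e^{-iε} + r e^{-(b+1)ε})^{-1} and f(η) = φ₀ e^{-iε} for (i-1)μ̄+1 ≤ η ≤ min(iμ̄, n), satisfies f(η) ≤ e^ε · f(η + μ) for all η ∈ {0,...,n} and all μ ∈ {1,...,μ̄} such that η + μ ≤ n. -/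
/-! The mass at `η` is `φ₀ e^{-kε}` with step index `k = ⌈η/μ̄⌉`, and a shift by at most `μ̄`
raises the step index by at most one, so the mass drops by a factor of at most `e^ε`. -/

theorem Nat.add_div_le_div_add_one {m a b : ℕ} (hab : a ≤ b) (hb : 0 < b) :
    (m + a) / b ≤ m / b + 1 :=
  calc (m + a) / b ≤ (m + b) / b := Nat.div_le_div_right (by omega)
    _ = m / b + 1 := Nat.add_div_right m hb

theorem Real.exp_neg_mul_le_exp_mul_exp_neg_mul {ε k l : ℝ} (hε : 0 ≤ ε) (hlk : l ≤ k + 1) :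
    Real.exp (-k * ε) ≤ Real.exp ε * Real.exp (-l * ε) := by
  rw [← Real.exp_add, Real.exp_le_exp]
  nlinarith

theorem stmt_13_general (n μbar : ℕ) (hμ1 : 1 ≤ μbar) (ε : ℝ) (hε : 0 < ε)
    (f : ℕ → ℝ)
    (hf : ∀ η : ℕ, f η =
      Real.exp (-(((η + μbar - 1) / μbar : ℕ) : ℝ) * ε) *
        (1 + (μbar : ℝ) * ∑ i ∈ Finset.Icc 1 (n / μbar), Real.exp (-(i : ℝ) * ε) +
          ((n - (n / μbar) * μbar : ℕ) : ℝ) *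
            Real.exp (-(((n / μbar : ℕ) : ℝ) + 1) * ε))⁻¹) :
    ∀ η ≤ n, ∀ μ : ℕ, 1 ≤ μ → μ ≤ μbar → η + μ ≤ n →
      f η ≤ Real.exp ε * f (η + μ) := by
  intro η _ μ _ hμ _
  have hstep : (η + μ + μbar - 1) / μbar ≤ (η + μbar - 1) / μbar + 1 := by
    rw [show η + μ + μbar - 1 = η + μbar - 1 + μ by omega]
    exact Nat.add_div_le_div_add_one hμ hμ1
  rw [hf, hf, ← mul_assoc]
  gcongr
  exact Real.exp_neg_mul_le_exp_mul_exp_neg_mul hε.le (by exact_mod_cast hstep)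

theorem stmt_13 (n μbar : ℕ) (hμ1 : 1 ≤ μbar) (hμ2 : μbar ≤ n) (ε : ℝ) (hε : 0 < ε)
    (f : ℕ → ℝ)
    (hf : ∀ η : ℕ, f η =
      Real.exp (-(((η + μbar - 1) / μbar : ℕ) : ℝ) * ε) *
        (1 + (μbar : ℝ) * ∑ i ∈ Finset.Icc 1 (n / μbar), Real.exp (-(i : ℝ) * ε) +
          ((n - (n / μbar) * μbar : ℕ) : ℝ) *
            Real.exp (-(((n / μbar : ℕ) : ℝ) + 1) * ε))⁻¹) :
    ∀ η ≤ n, ∀ μ : ℕ, 1 ≤ μ → μ ≤ μbar → η + μ ≤ n →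
      f η ≤ Real.exp ε * f (η + μ) :=
  stmt_13_general n μbar hμ1 ε hε f hf
end
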